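/- There exists an MDP M = (L, μ0, Σ, δ) and a strategy α such that M with strategy α is strongly synchronizing, but for every memoryless strategy β, M with strategy β is not strongly synchronizing. (Hence memoryless strategies are not sufficient for strongly synchronizing objectives in MDPs.) -/

import Mathlib

open Filter

namespace SyncMDP

/-- A history: an initial state followed by a list of (action, state) steps. -/
structure Hist (L A : Type) where
  start : L
  steps : List (A × L)
deriving DecidableEq

variable {L A : Type}

/-- The last state of a history. -/
def Hist.last (h : Hist L A) : L := h.steps.foldl (fun _ p => p.2) h.start

/-- The length of a history. -/
def Hist.len (h : Hist L A) : ℕ := h.steps.length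

/-- Extending a history by one action and one state. -/
def Hist.extend (h : Hist L A) (a : A) (l : L) : Hist L A := ⟨h.start, h.steps ++ [(a, l)]⟩

/-- A probability distribution on a finite type. -/
def IsDist {S : Type} [Fintype S] (d : S → ℝ) : Prop :=
  (∀ s, 0 ≤ d s) ∧ ∑ s, d s = 1

/-- A probabilistic transition function. -/
def IsTrans [Fintype L] (δ : L → A → L → ℝ) : Prop := ∀ l a, IsDist (δ l a)

/-- A (randomized) strategy assigns a distribution over actions to every history. -/
def IsStrategy [Fintype A] (α : Hist L A → A → ℝ) : Prop :=
  ∀ h : Hist L A, (∀ a, 0 ≤ α h a) ∧ ∑ a, α h a = 1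

/-- A pure strategy plays one action with probability one after every history. -/
def PureStrat (α : Hist L A → A → ℝ) : Prop := ∀ h, ∃ a, α h a = 1

/-- A blind strategy only depends on the length of the history. -/
def BlindStrat (α : Hist L A → A → ℝ) : Prop :=
  ∀ h₁ h₂ : Hist L A, h₁.len = h₂.len → α h₁ = α h₂

/-- A memoryless strategy only depends on the last state of the history. -/
def Memoryless (α : Hist L A → A → ℝ) : Prop :=
  ∀ h₁ h₂ : Hist L A, h₁.last = h₂.last → α h₁ = α h₂

/-- Auxiliary product for the probability of a history: the first argument is the current
state, the second the history (prefix) read so far, the third the remaining steps. -/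
def prAux (δ : L → A → L → ℝ) (α : Hist L A → A → ℝ) : L → Hist L A → List (A × L) → ℝ
  | _, _, [] => 1
  | cur, pre, (a, l) :: rest => α pre a * δ cur a l * prAux δ α l (pre.extend a l) rest

/-- The probability `Pr^α(h)` of a history `h`. -/
def pr (μ0 : L → ℝ) (δ : L → A → L → ℝ) (α : Hist L A → A → ℝ) (h : Hist L A) : ℝ :=
  μ0 h.start * prAux δ α h.start ⟨h.start, []⟩ h.steps

variable (L A) in
/-- The finite set of all histories of length `n`. -/
def hists [Fintype L] [DecidableEq L] [Fintype A] [DecidableEq A] : ℕ → Finset (Hist L A)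
  | 0 => Finset.univ.image fun l : L => ⟨l, []⟩
  | n + 1 => (hists n).biUnion fun h => Finset.univ.image fun p : A × L => h.extend p.1 p.2

variable [Fintype L] [DecidableEq L] [Fintype A] [DecidableEq A]

/-- The outcome `X_n^α` : the distribution over states at step `n` under strategy `α`. -/
noncomputable def outcome (μ0 : L → ℝ) (δ : L → A → L → ℝ) (α : Hist L A → A → ℝ)
    (n : ℕ) (l : L) : ℝ :=
  ∑ h ∈ (hists L A n).filter (fun h => h.last = l), pr μ0 δ α h

/-- The norm `‖X‖ = max_{ℓ ∈ L} X(ℓ)` of a distribution on a (nonempty) finite type. -/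
noncomputable def dnorm (X : L → ℝ) : ℝ := ⨆ l, X l

/-- Strongly synchronizing: `liminf_n ‖X_n^α‖ = 1`. -/
def StronglySync (μ0 : L → ℝ) (δ : L → A → L → ℝ) (α : Hist L A → A → ℝ) : Prop :=
  liminf (fun n => dnorm (outcome μ0 δ α n)) atTop = 1

/-- Weakly synchronizing: `limsup_n ‖X_n^α‖ = 1`. -/
def WeaklySync (μ0 : L → ℝ) (δ : L → A → L → ℝ) (α : Hist L A → A → ℝ) : Prop :=
  limsup (fun n => dnorm (outcome μ0 δ α n)) atTop = 1

open Classical in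
/-- `Post_σ(ℓ)`: the support of `δ(ℓ,σ)`. -/
noncomputable def post (δ : L → A → L → ℝ) (l : L) (a : A) : Finset L :=
  Finset.univ.filter fun l' => 0 < δ l a l'

/-- Transition function of the perfect-information subset construction. -/
noncomputable def deltaP (δ : L → A → L → ℝ) (s : Finset L) (f : L → A) : Finset L :=
  s.biUnion fun l => post δ l (f l)

/-- Transition function of the blind subset construction. -/
noncomputable def deltaB (δ : L → A → L → ℝ) (s : Finset L) (a : A) : Finset L :=
  s.biUnion fun l => post δ l a

open Classical in
/-- The initial cell: the support of `μ0`. -/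
noncomputable def initCell (μ0 : L → ℝ) : Finset L :=
  Finset.univ.filter fun l => 0 < μ0 l

/-- Reachability of a cell from the initial cell in the perfect-information
subset construction. -/
def ReachP (μ0 : L → ℝ) (δ : L → A → L → ℝ) (s : Finset L) : Prop :=
  Relation.ReflTransGen (fun t t' => ∃ f : L → A, deltaP δ t f = t') (initCell μ0) s

/-- Reachability of a cell from the initial cell in the blind subset construction. -/
def ReachB (μ0 : L → ℝ) (δ : L → A → L → ℝ) (s : Finset L) : Prop :=
  Relation.ReflTransGen (fun t t' => ∃ a : A, deltaB δ t a = t') (initCell μ0) s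

/-- Cyclic successor on `Fin d`. -/
def cyc {d : ℕ} (hd : 0 < d) (i : Fin d) : Fin d := ⟨((i : ℕ) + 1) % d, Nat.mod_lt _ hd⟩

/-- A recurrent cyclic set for the cycle `(s, act)` of length `d` of the
perfect-information subset construction. -/
def IsRCSP {d : ℕ} (hd : 0 < d) (δ : L → A → L → ℝ) (s : Fin d → Finset L)
    (act : Fin d → L → A) (g : Fin d → Finset L) : Prop :=
  ∀ i : Fin d, (g i).Nonempty ∧ g i ⊆ s i ∧
    (g i).biUnion (fun l => post δ l (act i l)) = g (cyc hd i)

/-- A minimal recurrent cyclic set (perfect-information). -/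
def IsMinRCSP {d : ℕ} (hd : 0 < d) (δ : L → A → L → ℝ) (s : Fin d → Finset L)
    (act : Fin d → L → A) (g : Fin d → Finset L) : Prop :=
  IsRCSP hd δ s act g ∧
    ∀ g' : Fin d → Finset L, IsRCSP hd δ s act g' → (∀ i, g' i ⊆ g i) → g' = g

/-- A recurrent cyclic set for the cycle `(s, act)` of length `d` of the blind
subset construction. -/
def IsRCSB {d : ℕ} (hd : 0 < d) (δ : L → A → L → ℝ) (s : Fin d → Finset L)
    (act : Fin d → A) (g : Fin d → Finset L) : Prop :=
  ∀ i : Fin d, (g i).Nonempty ∧ g i ⊆ s i ∧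
    (g i).biUnion (fun l => post δ l (act i)) = g (cyc hd i)

/-- A minimal recurrent cyclic set (blind). -/
def IsMinRCSB {d : ℕ} (hd : 0 < d) (δ : L → A → L → ℝ) (s : Fin d → Finset L)
    (act : Fin d → A) (g : Fin d → Finset L) : Prop :=
  IsRCSB hd δ s act g ∧
    ∀ g' : Fin d → Finset L, IsRCSB hd δ s act g' → (∀ i, g' i ⊆ g i) → g' = g


end SyncMDP

/-!
In `Example.transition`, state 0 keeps half of its mass and sends the other half to state 1
under either action; from state 1, action 0 leads to state 2 and action 1 back to state 0;
state 2 always leads to state 1. Alternating the actions 0, 1, 0, 1, … moves a quarter of the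
mass of state 0 every two steps into the cycle 1 ⇄ 2, in phase with the mass already there,
so the norm of the outcome tends to 1.

A memoryless strategy plays action 1 in state 1 with a fixed probability `q`. Strong
synchronization forces the mass in state 0 to vanish, since that state splits its mass in two.
If `q > 0`, mass flows back from states 1 and 2 to state 0, so `q = 0`. But then the mass
leaving state 0 at even and at odd times circulates in the cycle 1 ⇄ 2 out of phase, and
neither state 1 nor state 2 ever holds more than 2/3.
-/

namespace SyncMDP

section Histories

variable {L A : Type}

@[simp]
lemma Hist.last_extend (h : Hist L A) (a : A) (l : L) : (h.extend a l).last = l := by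
  simp [Hist.last, Hist.extend]

@[simp]
lemma Hist.len_extend (h : Hist L A) (a : A) (l : L) : (h.extend a l).len = h.len + 1 := by
  simp [Hist.len, Hist.extend]

lemma Hist.extend_eq_extend_iff {h₁ h₂ : Hist L A} {a₁ a₂ : A} {l₁ l₂ : L} :
    h₁.extend a₁ l₁ = h₂.extend a₂ l₂ ↔ h₁ = h₂ ∧ a₁ = a₂ ∧ l₁ = l₂ := by
  cases h₁; cases h₂
  simp [Hist.extend, and_assoc]

lemma prAux_append (δ : L → A → L → ℝ) (α : Hist L A → A → ℝ) (a : A) (l : L) :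
    ∀ (s : List (A × L)) (cur : L) (pre : Hist L A),
      prAux δ α cur pre (s ++ [(a, l)]) =
        prAux δ α cur pre s * α ⟨pre.start, pre.steps ++ s⟩ a *
          δ (s.foldl (fun _ p => p.2) cur) a l
  | [], cur, pre => by simp [prAux]
  | (a', l') :: s, cur, pre => by
    simp only [List.cons_append, prAux, List.foldl_cons, prAux_append δ α a l s, Hist.extend,
      List.append_assoc, List.nil_append]
    ring

lemma pr_extend (μ0 : L → ℝ) (δ : L → A → L → ℝ) (α : Hist L A → A → ℝ)
    (h : Hist L A) (a : A) (l : L) :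
    pr μ0 δ α (h.extend a l) = pr μ0 δ α h * α h a * δ h.last a l := by
  simp only [pr, Hist.extend, prAux_append, Hist.last, List.nil_append]
  ring

variable [Fintype L] [DecidableEq L] [Fintype A] [DecidableEq A]

lemma Hist.len_of_mem_hists {n : ℕ} {h : Hist L A} (hh : h ∈ hists L A n) : h.len = n := by
  induction n generalizing h with
  | zero =>
    obtain ⟨l, -, rfl⟩ := Finset.mem_image.mp hh
    rfl
  | succ n ih =>
    simp only [hists, Finset.mem_biUnion, Finset.mem_image] at hh
    obtain ⟨h', hh', p, -, rfl⟩ := hh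
    rw [Hist.len_extend, ih hh']

end Histories

def wordStrategy {L A : Type} [DecidableEq A] (w : ℕ → A) (h : Hist L A) (a : A) : ℝ :=
  if a = w h.len then 1 else 0

lemma isStrategy_wordStrategy {L A : Type} [Fintype A] [DecidableEq A] (w : ℕ → A) :
    IsStrategy (wordStrategy (L := L) w) :=
  fun h => ⟨fun a => by unfold wordStrategy; positivity, by simp [wordStrategy]⟩

section Outcome

variable {L A : Type} [Fintype L] [DecidableEq L] [Fintype A] [DecidableEq A]
  (μ0 : L → ℝ) (δ : L → A → L → ℝ) (α : Hist L A → A → ℝ)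

lemma outcome_zero (l : L) : outcome μ0 δ α 0 l = μ0 l := by
  have hinj : Function.Injective fun l : L => (⟨l, []⟩ : Hist L A) := fun _ _ h =>
    congrArg Hist.start h
  rw [outcome, Finset.sum_filter, hists, Finset.sum_image hinj.injOn]
  simp [Hist.last, pr, prAux]

lemma outcome_succ_eq_sum_hists (n : ℕ) (l' : L) :
    outcome μ0 δ α (n + 1) l' =
      ∑ h ∈ hists L A n, pr μ0 δ α h * ∑ a, α h a * δ h.last a l' := by
  have hdisj : (↑(hists L A n) : Set (Hist L A)).PairwiseDisjoint
      fun h => Finset.univ.image fun p : A × L => h.extend p.1 p.2 := by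
    intro h₁ _ h₂ _ hne
    simp only [Function.onFun, Finset.disjoint_left, Finset.mem_image]
    rintro x ⟨p, -, rfl⟩ ⟨q, -, hq⟩
    exact hne (Hist.extend_eq_extend_iff.mp hq).1.symm
  rw [outcome, Finset.sum_filter, hists, Finset.sum_biUnion hdisj]
  refine Finset.sum_congr rfl fun h _ => ?_
  have hinj : Function.Injective fun p : A × L => h.extend p.1 p.2 := fun p q hpq => by
    obtain ⟨-, ha, hl⟩ := Hist.extend_eq_extend_iff.mp hpq
    exact Prod.ext ha hl
  rw [Finset.sum_image hinj.injOn, Fintype.sum_prod_type, Finset.mul_sum]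
  refine Finset.sum_congr rfl fun a _ => ?_
  simp [pr_extend, mul_assoc]

lemma outcome_succ {φ : ℕ → L → A → ℝ} (hφ : ∀ h, α h = φ h.len h.last) (n : ℕ)
    (l' : L) :
    outcome μ0 δ α (n + 1) l' = ∑ l, outcome μ0 δ α n l * ∑ a, φ n l a * δ l a l' := by
  rw [outcome_succ_eq_sum_hists, ← Finset.sum_fiberwise (hists L A n) Hist.last]
  refine Finset.sum_congr rfl fun l _ => ?_
  rw [outcome, Finset.sum_mul]
  refine Finset.sum_congr rfl fun h hh => ?_
  obtain ⟨hmem, rfl⟩ := Finset.mem_filter.mp hh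
  rw [hφ, Hist.len_of_mem_hists hmem]

lemma outcome_succ_of_memoryless (hα : Memoryless α) (n : ℕ) (l' : L) :
    outcome μ0 δ α (n + 1) l' =
      ∑ l, outcome μ0 δ α n l * ∑ a, α ⟨l, []⟩ a * δ l a l' :=
  outcome_succ μ0 δ α (φ := fun _ l => α ⟨l, []⟩) (fun h => hα h _ rfl) n l'

lemma isDist_outcome (hμ0 : IsDist μ0) (hδ : IsTrans δ) {φ : ℕ → L → A → ℝ}
    (hφd : ∀ n l, IsDist (φ n l)) (hφ : ∀ h, α h = φ h.len h.last) (n : ℕ) :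
    IsDist (outcome μ0 δ α n) := by
  induction n with
  | zero => simpa [funext (outcome_zero μ0 δ α)] using hμ0
  | succ n ih =>
    simp only [IsDist, outcome_succ μ0 δ α hφ] at ih ⊢
    refine ⟨fun l' => Finset.sum_nonneg fun l _ => mul_nonneg (ih.1 l) <|
      Finset.sum_nonneg fun a _ => mul_nonneg ((hφd n l).1 a) ((hδ l a).1 l'), ?_⟩
    rw [Finset.sum_comm]
    simp_rw [← Finset.mul_sum, Finset.sum_comm (γ := L), ← Finset.mul_sum, (hδ _ _).2,
      mul_one, (hφd _ _).2, mul_one, ih.2]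

lemma outcome_wordStrategy_succ (w : ℕ → A) (n : ℕ) (l' : L) :
    outcome μ0 δ (wordStrategy w) (n + 1) l' =
      ∑ l, outcome μ0 δ (wordStrategy w) n l * δ l (w n) l' := by
  rw [outcome_succ μ0 δ (wordStrategy w) (φ := fun n _ a => if a = w n then 1 else 0)
    fun _ => rfl]
  simp

lemma isDist_outcome_wordStrategy (hμ0 : IsDist μ0) (hδ : IsTrans δ) (w : ℕ → A) (n : ℕ) :
    IsDist (outcome μ0 δ (wordStrategy w) n) :=
  isDist_outcome μ0 δ _ hμ0 hδ (φ := fun n _ a => if a = w n then 1 else 0)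
    (fun _ _ => ⟨fun _ => by positivity, by simp⟩)
    (fun _ => rfl) n

lemma isDist_outcome_of_memoryless (hμ0 : IsDist μ0) (hδ : IsTrans δ) (hα : IsStrategy α)
    (hαm : Memoryless α) (n : ℕ) : IsDist (outcome μ0 δ α n) :=
  isDist_outcome μ0 δ α hμ0 hδ (φ := fun _ l => α ⟨l, []⟩) (fun _ l => hα ⟨l, []⟩)
    (fun h => hαm h _ rfl) n

end Outcome

section Norm

variable {L : Type} [Fintype L] {X : L → ℝ}

lemma le_dnorm (X : L → ℝ) (l : L) : X l ≤ dnorm X :=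
  le_ciSup (Set.finite_range X).bddAbove l

lemma IsDist.le_one (hX : IsDist X) (l : L) : X l ≤ 1 := by
  classical
  rw [← hX.2]
  exact Finset.single_le_sum (fun l _ => hX.1 l) (Finset.mem_univ l)

lemma IsDist.add_le_one (hX : IsDist X) {l₁ l₂ : L} (hne : l₁ ≠ l₂) :
    X l₁ + X l₂ ≤ 1 := by
  classical
  rw [← hX.2, ← Finset.sum_pair hne]
  exact Finset.sum_le_univ_sum_of_nonneg hX.1

lemma IsDist.dnorm_le_one (hX : IsDist X) : dnorm X ≤ 1 :=
  Real.iSup_le hX.le_one zero_le_one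

lemma IsDist.dnorm_le_one_sub (hX : IsDist X) {l₁ l₂ : L} (hne : l₁ ≠ l₂) {t : ℝ}
    (h₁ : t ≤ X l₁) (h₂ : t ≤ X l₂) : dnorm X ≤ 1 - t := by
  refine Real.iSup_le (fun l => ?_) (by linarith [hX.le_one l₁])
  rcases eq_or_ne l l₁ with rfl | hl
  · linarith [hX.add_le_one hne]
  · linarith [hX.add_le_one hl]

end Norm

lemma StronglySync.tendsto {L A : Type} [Fintype L] [DecidableEq L] [Fintype A] [DecidableEq A]
    {μ0 : L → ℝ} {δ : L → A → L → ℝ} {α : Hist L A → A → ℝ}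
    (hX : ∀ n, IsDist (outcome μ0 δ α n)) (hα : StronglySync μ0 δ α) :
    Tendsto (fun n => dnorm (outcome μ0 δ α n)) atTop (nhds 1) := by
  have hle : ∀ n, dnorm (outcome μ0 δ α n) ≤ 1 := fun n => (hX n).dnorm_le_one
  have hge : ∀ n, 0 ≤ dnorm (outcome μ0 δ α n) := fun n => Real.iSup_nonneg (hX n).1
  exact tendsto_of_le_liminf_of_limsup_le hα.ge
    (limsup_le_of_le (isCoboundedUnder_le_of_le _ hge) (Eventually.of_forall hle))
    (isBoundedUnder_of ⟨1, hle⟩) (isBoundedUnder_of ⟨0, hge⟩)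

namespace Example

noncomputable def initial : Fin 3 → ℝ := ![1, 0, 0]

noncomputable def transition : Fin 3 → Fin 2 → Fin 3 → ℝ :=
  ![fun _ => ![1/2, 1/2, 0], ![![0, 0, 1], ![1, 0, 0]], fun _ => ![0, 1, 0]]

@[simp] lemma transition_zero (a : Fin 2) : transition 0 a = ![1/2, 1/2, 0] := rfl
@[simp] lemma transition_one_zero : transition 1 0 = ![0, 0, 1] := rfl
@[simp] lemma transition_one_one : transition 1 1 = ![1, 0, 0] := rfl
@[simp] lemma transition_two (a : Fin 2) : transition 2 a = ![0, 1, 0] := rfl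

lemma isDist_initial : IsDist initial :=
  ⟨fun l => by fin_cases l <;> norm_num [initial], by simp [initial, Fin.sum_univ_three]⟩

lemma isTrans_transition : IsTrans transition := by
  simp only [IsTrans, IsDist, Fin.forall_fin_succ, Fin.sum_univ_three]
  norm_num [Matrix.cons_val_two]

def alternating (n : ℕ) : Fin 2 := if Even n then 0 else 1

local notation "X" => outcome initial transition (wordStrategy alternating)

lemma outcome_alternating_succ_of_even {n : ℕ} (hn : Even n) {x y z : ℝ}
    (h : X n = ![x, y, z]) : X (n + 1) = ![x / 2, x / 2 + z, y] := by
  funext l'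
  rw [outcome_wordStrategy_succ]
  fin_cases l' <;> simp [Fin.sum_univ_three, h, alternating, hn, div_eq_mul_inv]

lemma outcome_alternating_succ_of_odd {n : ℕ} (hn : ¬Even n) {x y z : ℝ}
    (h : X n = ![x, y, z]) : X (n + 1) = ![x / 2 + y, x / 2 + z, 0] := by
  funext l'
  rw [outcome_wordStrategy_succ]
  fin_cases l' <;> simp [Fin.sum_univ_three, h, alternating, hn, div_eq_mul_inv]

lemma outcome_alternating_even (k : ℕ) : X (2 * k) = ![(3/4) ^ k, 1 - (3/4) ^ k, 0] := by
  induction k with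
  | zero =>
    ext l
    fin_cases l <;> simp [outcome_zero, initial]
  | succ k ih =>
    have h₁ := outcome_alternating_succ_of_even (even_two_mul k) ih
    have h₂ := outcome_alternating_succ_of_odd (Nat.not_even_two_mul_add_one k) h₁
    rw [show 2 * (k + 1) = 2 * k + 1 + 1 by ring, h₂]
    ext l
    fin_cases l <;>
      simp only [Fin.zero_eta, Fin.mk_one, Fin.reduceFinMk, Fin.isValue, Matrix.cons_val_zero,
        Matrix.cons_val_one, Matrix.cons_val] <;>
      ring

lemma outcome_alternating_odd (k : ℕ) :
    X (2 * k + 1) = ![(3/4) ^ k / 2, (3/4) ^ k / 2, 1 - (3/4) ^ k] := by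
  simpa using outcome_alternating_succ_of_even (even_two_mul k) (outcome_alternating_even k)

lemma stronglySync_alternating : StronglySync initial transition (wordStrategy alternating) := by
  have hlow : ∀ n, 1 - (3/4 : ℝ) ^ (n / 2) ≤ dnorm (X n) := by
    intro n
    obtain ⟨k, rfl | rfl⟩ := Nat.even_or_odd' n
    · simpa [outcome_alternating_even] using le_dnorm (X (2 * k)) 1
    · have : (2 * k + 1) / 2 = k := by omega
      simpa [outcome_alternating_odd, this] using le_dnorm (X (2 * k + 1)) 2
  have hpow : Tendsto (fun n => 1 - (3/4 : ℝ) ^ (n / 2)) atTop (nhds 1) := by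
    have := tendsto_pow_atTop_nhds_zero_of_lt_one (r := (3/4 : ℝ)) (by norm_num) (by norm_num)
    simpa using (this.comp (Nat.tendsto_div_const_atTop two_ne_zero)).const_sub 1
  have hle : ∀ n, dnorm (X n) ≤ 1 := fun n =>
    (isDist_outcome_wordStrategy _ _ isDist_initial isTrans_transition _ n).dnorm_le_one
  exact (tendsto_of_tendsto_of_tendsto_of_le_of_le hpow tendsto_const_nhds hlow hle).liminf_eq

section Memoryless

variable {β : Hist (Fin 3) (Fin 2) → Fin 2 → ℝ}

local notation "Y" => outcome initial transition β

lemma outcome_memoryless_succ (hβ : IsStrategy β) (hβm : Memoryless β) (n : ℕ) :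
    Y (n + 1) =
      ![Y n 0 / 2 + β ⟨1, []⟩ 1 * Y n 1, Y n 0 / 2 + Y n 2, β ⟨1, []⟩ 0 * Y n 1] := by
  have hsum : ∀ l, β ⟨l, []⟩ 0 + β ⟨l, []⟩ 1 = 1 := fun l => by
    simpa [Fin.sum_univ_two] using (hβ ⟨l, []⟩).2
  funext l'
  rw [outcome_succ_of_memoryless _ _ _ hβm]
  fin_cases l' <;>
    simp only [Fin.zero_eta, Fin.mk_one, Fin.reduceFinMk, Fin.isValue, Fin.sum_univ_two,
      Fin.sum_univ_three, transition_zero, transition_one_zero, transition_one_one, transition_two,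
      Matrix.cons_val_zero, Matrix.cons_val_one, Matrix.cons_val]
  · linear_combination (Y n 0 / 2) * hsum 0
  · linear_combination (Y n 0 / 2) * hsum 0 + Y n 2 * hsum 2
  · ring

lemma tendsto_outcome_zero_of_stronglySync (hβ : IsStrategy β) (hβm : Memoryless β)
    (hsync : StronglySync initial transition β) : Tendsto (fun n => Y n 0) atTop (nhds 0) := by
  have hX := isDist_outcome_of_memoryless _ _ _ isDist_initial isTrans_transition hβ hβm
  have hbound : ∀ n, Y n 0 ≤ 2 * (1 - dnorm (Y (n + 1))) := fun n => by
    have hstep := outcome_memoryless_succ hβ hβm n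
    have := (hX (n + 1)).dnorm_le_one_sub (l₁ := 0) (l₂ := 1) (t := Y n 0 / 2) (by decide)
      (by simp [hstep, mul_nonneg ((hβ _).1 1) ((hX n).1 1)]) (by simp [hstep, (hX n).1])
    linarith
  have hlim : Tendsto (fun n => 2 * (1 - dnorm (Y (n + 1)))) atTop (nhds 0) := by
    simpa using (((hsync.tendsto hX).comp (tendsto_add_atTop_nat 1)).const_sub 1).const_mul 2
  exact tendsto_of_tendsto_of_tendsto_of_le_of_le tendsto_const_nhds hlim (fun n => (hX n).1 0)
    hbound

lemma return_prob_eq_zero_of_stronglySync (hβ : IsStrategy β) (hβm : Memoryless β)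
    (hsync : StronglySync initial transition β) : β ⟨1, []⟩ 1 = 0 := by
  have hX := isDist_outcome_of_memoryless _ _ _ isDist_initial isTrans_transition hβ hβm
  have h0 := tendsto_outcome_zero_of_stronglySync hβ hβm hsync
  -- mass in state 1 returns to 0 within one step, mass in state 2 within two
  have hreturn : ∀ n, β ⟨1, []⟩ 1 * (1 - Y n 0) ≤ Y (n + 1) 0 + Y (n + 2) 0 := fun n => by
    have h₁ := outcome_memoryless_succ hβ hβm n
    have h₂ := outcome_memoryless_succ hβ hβm (n + 1)
    have hsum : Y n 0 + Y n 1 + Y n 2 = 1 := by simpa [Fin.sum_univ_three] using (hX n).2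
    simp only [h₂, h₁, Matrix.cons_val_zero, Matrix.cons_val_one, Matrix.cons_val_two]
    nlinarith [(hβ ⟨1, []⟩).1 1, (hX n).1 0, (hX n).1 1, (hX n).1 2]
  have hle := le_of_tendsto_of_tendsto'
    (by simpa using (h0.const_sub 1).const_mul (β ⟨1, []⟩ 1))
    (by simpa using (h0.comp (tendsto_add_atTop_nat 1)).add (h0.comp (tendsto_add_atTop_nat 2)))
    hreturn
  exact le_antisymm hle ((hβ _).1 1)

lemma dnorm_outcome_le_of_return_prob_eq_zero (hβ : IsStrategy β) (hβm : Memoryless β)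
    (hq : β ⟨1, []⟩ 1 = 0) (n : ℕ) : dnorm (Y n) ≤ max (Y n 0) (2/3) := by
  have hX := isDist_outcome_of_memoryless _ _ _ isDist_initial isTrans_transition hβ hβm
  have hinv : ∀ n, Y n 1 + Y n 0 / 3 ≤ 2/3 ∧ Y n 2 + 2 * Y n 0 / 3 ≤ 2/3 := by
    intro n
    induction n with
    | zero => simp only [outcome_zero, initial, Matrix.cons_val]; norm_num
    | succ n ih =>
      have hp : β ⟨1, []⟩ 0 ≤ 1 := by
        simpa [Fin.sum_univ_two, hq] using (hβ ⟨1, []⟩).2.le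
      simp only [outcome_memoryless_succ hβ hβm n, hq, Matrix.cons_val_zero, Matrix.cons_val_one,
        Matrix.cons_val_two, Matrix.tail_cons, Matrix.head_cons]
      constructor
      · linarith
      · nlinarith [(hX n).1 1]
  have hY0 := (hX n).1 0
  have hY1 : Y n 1 ≤ 2/3 := by linarith [(hinv n).1]
  have hY2 : Y n 2 ≤ 2/3 := by linarith [(hinv n).2]
  refine Real.iSup_le (fun l => ?_) (le_max_of_le_right (by norm_num))
  fin_cases l
  · exact le_max_left _ _
  · exact le_max_of_le_right hY1
  · exact le_max_of_le_right hY2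

lemma not_stronglySync_of_memoryless (hβ : IsStrategy β) (hβm : Memoryless β) :
    ¬StronglySync initial transition β := by
  intro hsync
  have hX := isDist_outcome_of_memoryless _ _ _ isDist_initial isTrans_transition hβ hβm
  have hq := return_prob_eq_zero_of_stronglySync hβ hβm hsync
  have h0 := tendsto_outcome_zero_of_stronglySync hβ hβm hsync
  have : (1 : ℝ) ≤ max 0 (2/3) := le_of_tendsto_of_tendsto' (hsync.tendsto hX)
    (h0.max tendsto_const_nhds) (dnorm_outcome_le_of_return_prob_eq_zero hβ hβm hq)
  norm_num at this

end Memoryless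

end Example

/-- There is an MDP (with finite state space `Fin n` and finite action
alphabet `Fin m`) and a strategy `α` that is strongly synchronizing, while no memoryless
strategy is strongly synchronizing. -/
theorem memoryless_insufficient_strongly :
    ∃ (n m : ℕ) (μ0 : Fin n → ℝ) (δ : Fin n → Fin m → Fin n → ℝ),
      IsDist μ0 ∧ IsTrans δ ∧
      (∃ α : Hist (Fin n) (Fin m) → Fin m → ℝ, IsStrategy α ∧ StronglySync μ0 δ α) ∧
      (∀ β : Hist (Fin n) (Fin m) → Fin m → ℝ,
        IsStrategy β → Memoryless β → ¬ StronglySync μ0 δ β) :=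
  ⟨3, 2, Example.initial, Example.transition, Example.isDist_initial, Example.isTrans_transition,
    ⟨wordStrategy Example.alternating, isStrategy_wordStrategy _,
      Example.stronglySync_alternating⟩,
    fun _ hβ hβm => Example.not_stronglySync_of_memoryless hβ hβm⟩

end SyncMDP
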